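/- In the closeness-reduction graph with A* ⊆ {(t,S_i) : S_i ∈ S} and |A*| ≤ k, the inequality D(G',t) < D(G',v_e) holds if and only if |A*| = k and the sets {S_j : (t,S_j) ∈ A*} cover the universe U, i.e., for every u_i ∈ U there is S_j with u_i ∈ S_j and (t,S_j) ∈ A*. -/
import Mathlib


/-- Vertex type of the closeness-reduction graph built from a 3-Set Cover instance with
universe size `l`, family size `m` and parameter `k`:
`v_e = Sum.inl (Sum.inl ())`, `t = Sum.inl (Sum.inr ())`,
set nodes `S_i = Sum.inr (Sum.inl (Sum.inl i))`,
universe nodes `u_j = Sum.inr (Sum.inl (Sum.inr j))`,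
nodes `w_j = Sum.inr (Sum.inr (Sum.inl j))`, and
pendant nodes `x_i = Sum.inr (Sum.inr (Sum.inr i))`. -/
abbrev CVert (l m k : ℕ) :=
  (Unit ⊕ Unit) ⊕ (Fin m ⊕ Fin l) ⊕ (Fin l ⊕ Fin (l + m - k + 1))

/-- The closeness-reduction graph `G' = (V, E ∪ A*)` built from a 3-Set Cover instance
`(U, S, k)`, where `S i` is the `i`-th 3-element subset of the universe `Fin l` and the
set `A ⊆ Fin m` records the added edges `(t, S_i)` for `i ∈ A`.  Base edges: `(t, v_e)`;
`(x_i, t)` for all `i`; `(w_j, v_e)` and `(w_j, u_j)` for all `j`; `(S_i, v_e)` for all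
`i`; and `(S_i, u_j)` for `u_j ∈ S_i`. -/
def Cgraph (l m k : ℕ) (S : Fin m → Finset (Fin l)) (A : Finset (Fin m)) :
    SimpleGraph (CVert l m k) :=
  SimpleGraph.fromRel (fun a b =>
    match a, b with
    | Sum.inl (Sum.inl _), Sum.inl (Sum.inr _) => True
    | Sum.inr (Sum.inr (Sum.inr _)), Sum.inl (Sum.inr _) => True
    | Sum.inr (Sum.inr (Sum.inl _)), Sum.inl (Sum.inl _) => True
    | Sum.inr (Sum.inr (Sum.inl j)), Sum.inr (Sum.inl (Sum.inr j')) => j = j'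
    | Sum.inr (Sum.inl (Sum.inl _)), Sum.inl (Sum.inl _) => True
    | Sum.inr (Sum.inl (Sum.inl i)), Sum.inr (Sum.inl (Sum.inr j)) => j ∈ S i
    | Sum.inl (Sum.inr _), Sum.inr (Sum.inl (Sum.inl i)) => i ∈ A
    | _, _ => False)

/-- `D(G', v)`: the sum of shortest-path distances from `v` to all other nodes. -/
noncomputable def Dsum {l m k : ℕ} (G : SimpleGraph (CVert l m k)) (v : CVert l m k) : ℕ :=
  ∑ w : CVert l m k, G.dist v w


section helpers

variable {V : Type*} {G : SimpleGraph V} {a b c d : V}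

lemma dist_eq_two' (hne : a ≠ b) (hna : ¬ G.Adj a b) (h1 : G.Adj a c) (h2 : G.Adj c b) :
    G.dist a b = 2 := by
  have hle : G.dist a b ≤ 2 := by
    have := G.dist_le (SimpleGraph.Walk.cons h1 h2.toWalk)
    simpa using this
  have hr : G.Reachable a b := ⟨SimpleGraph.Walk.cons h1 h2.toWalk⟩
  have h0 : G.dist a b ≠ 0 := by
    simp [SimpleGraph.dist_eq_zero_iff_eq_or_not_reachable, hne, hr]
  have h1' : G.dist a b ≠ 1 := fun hd => hna (SimpleGraph.dist_eq_one_iff_adj.1 hd)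
  omega

lemma dist_eq_three' (hne : a ≠ b) (hna : ¬ G.Adj a b)
    (hno2 : ∀ z, G.Adj a z → ¬ G.Adj z b)
    (h1 : G.Adj a c) (h2 : G.Adj c d) (h3 : G.Adj d b) :
    G.dist a b = 3 := by
  have hle : G.dist a b ≤ 3 := by
    have := G.dist_le (SimpleGraph.Walk.cons h1 (SimpleGraph.Walk.cons h2 h3.toWalk))
    simpa using this
  have hr : G.Reachable a b := ⟨SimpleGraph.Walk.cons h1 (SimpleGraph.Walk.cons h2 h3.toWalk)⟩
  have h0 : G.dist a b ≠ 0 := by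
    simp [SimpleGraph.dist_eq_zero_iff_eq_or_not_reachable, hne, hr]
  have h1' : G.dist a b ≠ 1 := fun hd => hna (SimpleGraph.dist_eq_one_iff_adj.1 hd)
  have h2' : G.dist a b ≠ 2 := by
    intro hd
    obtain ⟨p, hp⟩ := SimpleGraph.exists_walk_of_dist_ne_zero (G := G) (u := a) (v := b) h0
    rw [hd] at hp
    cases p with
    | nil => simp at hp
    | cons h q =>
      simp at hp
      exact hno2 _ h (q.adj_of_length_eq_one hp)
  omega

end helpers

section main

variable {l m k : ℕ} {S : Fin m → Finset (Fin l)} {A : Finset (Fin m)}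

local notation "ve" => (Sum.inl (Sum.inl ()) : CVert l m k)
local notation "tt" => (Sum.inl (Sum.inr ()) : CVert l m k)
local notation "sv" i => (Sum.inr (Sum.inl (Sum.inl i)) : CVert l m k)
local notation "uv" j => (Sum.inr (Sum.inl (Sum.inr j)) : CVert l m k)
local notation "wv" j => (Sum.inr (Sum.inr (Sum.inl j)) : CVert l m k)
local notation "xv" i => (Sum.inr (Sum.inr (Sum.inr i)) : CVert l m k)

variable (S A) in
lemma adj_ve_t : (Cgraph l m k S A).Adj ve tt := by
  simp [Cgraph, SimpleGraph.fromRel_adj]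

variable (S A) in
lemma adj_ve_s (i : Fin m) : (Cgraph l m k S A).Adj ve (sv i) := by
  simp [Cgraph, SimpleGraph.fromRel_adj]

variable (S A) in
lemma adj_ve_w (j : Fin l) : (Cgraph l m k S A).Adj ve (wv j) := by
  simp [Cgraph, SimpleGraph.fromRel_adj]

variable (S A) in
lemma adj_t_x (i : Fin (l + m - k + 1)) : (Cgraph l m k S A).Adj tt (xv i) := by
  simp [Cgraph, SimpleGraph.fromRel_adj]

variable (S A) in
lemma adj_w_u (j : Fin l) : (Cgraph l m k S A).Adj (wv j) (uv j) := by
  simp [Cgraph, SimpleGraph.fromRel_adj]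

variable (S A) in
lemma adj_s_u (i : Fin m) (j : Fin l) :
    (Cgraph l m k S A).Adj (sv i) (uv j) ↔ j ∈ S i := by
  simp [Cgraph, SimpleGraph.fromRel_adj]

variable (S A) in
lemma adj_t_s (i : Fin m) : (Cgraph l m k S A).Adj tt (sv i) ↔ i ∈ A := by
  simp [Cgraph, SimpleGraph.fromRel_adj]

variable (S A) in
lemma not_adj_ve_u (j : Fin l) : ¬ (Cgraph l m k S A).Adj ve (uv j) := by
  simp [Cgraph, SimpleGraph.fromRel_adj]

variable (S A) in
lemma not_adj_ve_x (i : Fin (l + m - k + 1)) : ¬ (Cgraph l m k S A).Adj ve (xv i) := by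
  simp [Cgraph, SimpleGraph.fromRel_adj]

variable (S A) in
lemma not_adj_t_w (j : Fin l) : ¬ (Cgraph l m k S A).Adj tt (wv j) := by
  simp [Cgraph, SimpleGraph.fromRel_adj]

variable (S A) in
lemma not_adj_t_u (j : Fin l) : ¬ (Cgraph l m k S A).Adj tt (uv j) := by
  simp [Cgraph, SimpleGraph.fromRel_adj]

-- distances from ve
lemma dve_t : (Cgraph l m k S A).dist ve tt = 1 :=
  SimpleGraph.dist_eq_one_iff_adj.2 (adj_ve_t S A)

lemma dve_s (i : Fin m) : (Cgraph l m k S A).dist ve (sv i) = 1 :=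
  SimpleGraph.dist_eq_one_iff_adj.2 (adj_ve_s S A i)

lemma dve_w (j : Fin l) : (Cgraph l m k S A).dist ve (wv j) = 1 :=
  SimpleGraph.dist_eq_one_iff_adj.2 (adj_ve_w S A j)

lemma dve_u (j : Fin l) : (Cgraph l m k S A).dist ve (uv j) = 2 :=
  dist_eq_two' (by simp) (not_adj_ve_u S A j) (adj_ve_w S A j) (adj_w_u S A j)

lemma dve_x (i : Fin (l + m - k + 1)) : (Cgraph l m k S A).dist ve (xv i) = 2 :=
  dist_eq_two' (by simp) (not_adj_ve_x S A i) (adj_ve_t S A) (adj_t_x S A i)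

-- distances from t
lemma dt_ve : (Cgraph l m k S A).dist tt ve = 1 :=
  SimpleGraph.dist_eq_one_iff_adj.2 (adj_ve_t S A).symm

lemma dt_x (i : Fin (l + m - k + 1)) : (Cgraph l m k S A).dist tt (xv i) = 1 :=
  SimpleGraph.dist_eq_one_iff_adj.2 (adj_t_x S A i)

lemma dt_w (j : Fin l) : (Cgraph l m k S A).dist tt (wv j) = 2 :=
  dist_eq_two' (by simp) (not_adj_t_w S A j) (adj_ve_t S A).symm (adj_ve_w S A j)

lemma dt_s (i : Fin m) :
    (Cgraph l m k S A).dist tt (sv i) = if i ∈ A then 1 else 2 := by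
  split_ifs with h
  · exact SimpleGraph.dist_eq_one_iff_adj.2 ((adj_t_s S A i).2 h)
  · exact dist_eq_two' (by simp) (fun hadj => h ((adj_t_s S A i).1 hadj))
      (adj_ve_t S A).symm (adj_ve_s S A i)

lemma dt_u (j : Fin l) :
    (Cgraph l m k S A).dist tt (uv j) = if ∃ i ∈ A, j ∈ S i then 2 else 3 := by
  split_ifs with h
  · obtain ⟨i, hi, hji⟩ := h
    exact dist_eq_two' (by simp) (not_adj_t_u S A j)
      ((adj_t_s S A i).2 hi) ((adj_s_u S A i j).2 hji)
  · push_neg at h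
    refine dist_eq_three' (by simp) (not_adj_t_u S A j) ?_
      (adj_ve_t S A).symm (adj_ve_w S A j) (adj_w_u S A j)
    rintro (⟨_|_⟩|⟨i|j'⟩|⟨j'|i⟩) hz hzb
    · exact (not_adj_ve_u S A j) hzb
    · simp at hz
    · exact h i ((adj_t_s S A i).1 hz) ((adj_s_u S A i j).1 hzb)
    · exact (not_adj_t_u S A j') hz
    · simp [Cgraph, SimpleGraph.fromRel_adj] at hzb
      subst hzb
      exact (not_adj_t_w S A j') hz
    · simp [Cgraph, SimpleGraph.fromRel_adj] at hzb

lemma Dsum_expand (G : SimpleGraph (CVert l m k)) (v : CVert l m k) :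
    Dsum G v = (G.dist v ve + G.dist v tt)
      + ((∑ i, G.dist v (sv i) + ∑ j, G.dist v (uv j))
      + (∑ j, G.dist v (wv j) + ∑ i, G.dist v (xv i))) := by
  simp [Dsum, Fintype.sum_sum_type]

lemma Dsum_ve (hkm : k ≤ m) :
    Dsum (Cgraph l m k S A) ve = 5 * l + 3 * m - 2 * k + 3 := by
  rw [Dsum_expand]
  simp only [SimpleGraph.dist_self, dve_t, dve_s, dve_u, dve_w, dve_x,
    Finset.sum_const, Finset.card_univ, Fintype.card_fin, smul_eq_mul]
  omega

open Finset in
lemma Dsum_t (hkm : k ≤ m) (hA : A.card ≤ k) :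
    Dsum (Cgraph l m k S A) tt
      = 6 * l + 3 * m - k + 2 - A.card - (univ.filter fun j => ∃ i ∈ A, j ∈ S i).card := by
  rw [Dsum_expand]
  simp only [SimpleGraph.dist_self, dt_ve, dt_s, dt_u, dt_w, dt_x,
    Finset.sum_const, Finset.card_univ, Fintype.card_fin, smul_eq_mul]
  have hsu : ∑ j : Fin l, (if ∃ i ∈ A, j ∈ S i then 2 else 3)
      = 2 * (univ.filter fun j => ∃ i ∈ A, j ∈ S i).card
        + 3 * (l - (univ.filter fun j => ∃ i ∈ A, j ∈ S i).card) := by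
    rw [Finset.sum_ite, Finset.sum_const, Finset.sum_const, smul_eq_mul, smul_eq_mul,
      Finset.filter_not, Finset.card_sdiff_of_subset (Finset.filter_subset _ _)]
    simp [mul_comm]
  rw [hsu]
  have h1 : (univ.filter fun j => ∃ i ∈ A, j ∈ S i).card ≤ l := by
    simpa using Finset.card_filter_le univ (fun j => ∃ i ∈ A, j ∈ S i)
  have h2 : A.card ≤ m := hA.trans hkm
  have h3 : (univ \ A).card = m - A.card := by
    rw [Finset.card_sdiff_of_subset (Finset.subset_univ _)]; simp
  -- the sum over Fin m splits as A.card * 1 + (m - A.card) * 2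
  have h4 : ∑ i : Fin m, (if i ∈ A then 1 else 2) = A.card + 2 * (m - A.card) := by
    rw [Finset.sum_ite, Finset.sum_const, Finset.sum_const, smul_eq_mul, smul_eq_mul,
      Finset.filter_mem_eq_inter, Finset.univ_inter, Finset.filter_not,
      Finset.filter_mem_eq_inter, Finset.univ_inter, h3]
    omega
  simp only [h4, hsu]
  omega

end main

/-- With `|A*| ≤ k`, the inequality `D(G',t) < D(G',v_e)` holds if and only if
`|A*| = k` and the sets `{S_j : (t,S_j) ∈ A*}` cover the universe `U`. -/
theorem Dt_lt_Dve_iff_cover (l m k : ℕ) (hl : 1 ≤ l) (hk : 1 ≤ k) (hkm : k ≤ m)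
    (S : Fin m → Finset (Fin l)) (h3 : ∀ i, (S i).card = 3)
    (A : Finset (Fin m)) (hA : A.card ≤ k) :
    let G' := Cgraph l m k S A
    (Dsum G' (Sum.inl (Sum.inr ())) < Dsum G' (Sum.inl (Sum.inl ()))) ↔
      (A.card = k ∧ ∀ j : Fin l, ∃ i ∈ A, j ∈ S i) := by
  show (Dsum (Cgraph l m k S A) (Sum.inl (Sum.inr ())) <
      Dsum (Cgraph l m k S A) (Sum.inl (Sum.inl ()))) ↔ _
  rw [Dsum_t hkm hA, Dsum_ve hkm]
  have hc : (Finset.univ.filter fun j => ∃ i ∈ A, j ∈ S i).card ≤ l := by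
    simpa using Finset.card_filter_le Finset.univ (fun j => ∃ i ∈ A, j ∈ S i)
  have hcov : (Finset.univ.filter fun j => ∃ i ∈ A, j ∈ S i).card = l ↔
      ∀ j : Fin l, ∃ i ∈ A, j ∈ S i := by
    constructor
    · intro h j
      have hu : (Finset.univ.filter fun j => ∃ i ∈ A, j ∈ S i) = Finset.univ :=
        Finset.eq_univ_of_card _ (by simpa using h)
      have hj : j ∈ (Finset.univ.filter fun j => ∃ i ∈ A, j ∈ S i) := by
        rw [hu]; exact Finset.mem_univ j
      exact (Finset.mem_filter.1 hj).2
    · intro h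
      rw [Finset.filter_true_of_mem (fun j _ => h j)]
      simp
  constructor
  · intro hlt
    have h1 : A.card = k ∧ (Finset.univ.filter fun j => ∃ i ∈ A, j ∈ S i).card = l := by
      omega
    exact ⟨h1.1, hcov.1 h1.2⟩
  · rintro ⟨ha, hcv⟩
    have := hcov.2 hcv
    omega
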